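/- arXiv:1708.01421 — 4 statements merged into one kernel-verified Lean document; each statement's English description precedes it below -/
import Mathlib

section
/- Let F be a formal power series over ℚ with F(0) = 0 and with the coefficient of x^1 in F nonzero, and define A(n,m) := [x^n]( F(x)^m ). Work in the ring (ℚ[[t]])[[y]] and let X = x(t;y) be the element with zero constant term satisfying X − t·F(X) = y, i.e., the compositional inverse of y(t;x) = x − t·F(x). Then for all integers d ≥ 0 and p ≥ 0, the coefficient of t^p·y^{d+1} in x(t;y) equals binom(d+p,p)·A(d+p,p)/(d+1). Equivalently, x(t;y) = Σ_{d≥0} G D̂(d,t)·y^{d+1}/(d+1), where G D̂(d,t) := Σ_{p≥0} binom(d+p,p)·A(d+p,p)·t^p. -/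
/-!
Write `F = x·g` and `φ(x) = x - t·F(x) = x·v` with `v = 1 - t·g(x)`, so that `x(t;y)` is the
compositional inverse `ψ` of `φ`. Differentiating `ψ(φ(x)) = x` gives `ψ'(φ)·φ' = 1`. Multiply by
`v^{-(d+1)}` and read off `[x^d]`: writing `ψ'(φ) = Σ_k ψ'_k φ^k`, the term `[x^d] φ^k φ' v^{-(d+1)}`
is the residue of `φ'/φ^{d+1-k}`, which vanishes for `k < d` because that quotient is a derivative.
Hence `(d+1)·[y^{d+1}] ψ = [x^d] v^{-(d+1)} = Σ_p binom(d+p,p)·t^p·[x^d] g^p`, and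
`[x^d] g^p = [x^{d+p}] F^p = A(d+p,p)`.
-/

open PowerSeries

/-- Formal composition (substitution) `f(a)` of formal power series: substituting `a`
(which is intended to have zero constant term) into `f`. -/
noncomputable def PowerSeries.substitute {R : Type*} [CommRing R] (a f : R⟦X⟧) : R⟦X⟧ :=
  PowerSeries.mk fun n => ∑ k ∈ Finset.range (n + 1),
    PowerSeries.coeff k f * PowerSeries.coeff n (a ^ k)

open Finset

namespace PowerSeries

variable {R : Type*} [CommRing R]

theorem coeff_pow_eq_zero_of_lt {a : R⟦X⟧} (ha : constantCoeff a = 0) {n k : ℕ} (h : n < k) :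
    coeff n (a ^ k) = 0 :=
  X_pow_dvd_iff.mp (pow_dvd_pow_of_dvd (X_dvd_iff.mpr ha) k) n h

theorem coeff_subst_eq_sum_range {a : R⟦X⟧} (ha : constantCoeff a = 0) (f : R⟦X⟧) (n : ℕ) :
    coeff n (f.subst a) = ∑ k ∈ range (n + 1), coeff k f * coeff n (a ^ k) := by
  rw [coeff_subst' (HasSubst.of_constantCoeff_zero' ha), finsum_eq_sum_of_support_subset]
  · rfl
  · intro k hk
    by_contra hkn
    simp only [coe_range, Set.mem_Iio, not_lt] at hkn
    exact hk (by simp only [coeff_pow_eq_zero_of_lt ha hkn, smul_zero])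

theorem substitute_eq_subst {a : R⟦X⟧} (ha : constantCoeff a = 0) (f : R⟦X⟧) :
    substitute a f = f.subst a := by
  ext n
  rw [substitute, coeff_mk, coeff_subst_eq_sum_range ha]

theorem coeff_subst_mul {a : R⟦X⟧} (ha : constantCoeff a = 0) (f h : R⟦X⟧) (n : ℕ) :
    coeff n (f.subst a * h) = ∑ k ∈ range (n + 1), coeff k f * coeff n (a ^ k * h) := by
  set s := ∑ k ∈ range (n + 1), C (coeff k f) * a ^ k
  have hagree : ∀ i ≤ n, coeff i (f.subst a) = coeff i s := by
    intro i hi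
    rw [coeff_subst_eq_sum_range ha, map_sum]
    simp only [coeff_C_mul]
    refine sum_subset (range_subset_range.mpr (by omega)) fun k _ hk => ?_
    rw [coeff_pow_eq_zero_of_lt ha (by simpa using hk), mul_zero]
  calc coeff n (f.subst a * h) = coeff n (s * h) := by
        rw [coeff_mul, coeff_mul]
        refine sum_congr rfl fun ij hij => ?_
        rw [hagree ij.1 (HasAntidiagonal.antidiagonal.fst_le hij)]
    _ = _ := by simp only [s, sum_mul, map_sum, mul_assoc, coeff_C_mul]

theorem subst_eq_X_of_subst_eq_X {φ ψ : R⟦X⟧} (hφ0 : constantCoeff φ = 0)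
    (hψ0 : constantCoeff ψ = 0) (hφ1 : IsUnit (coeff 1 φ)) (h : φ.subst ψ = X) :
    ψ.subst φ = X := by
  have hφ : HasSubst φ := HasSubst.of_constantCoeff_zero' hφ0
  have hψ : HasSubst ψ := HasSubst.of_constantCoeff_zero' hψ0
  have hinv : ψ = φ.substInvOfIsUnit hφ1 := by
    calc ψ = (X : R⟦X⟧).subst ψ := (subst_X hψ).symm
      _ = subst ψ ((φ.substInvOfIsUnit hφ1).subst φ) := by rw [subst_substInvOfIsUnit_left _ hφ0]
      _ = φ.substInvOfIsUnit hφ1 := by rw [subst_comp_subst_apply hφ hψ, h, X_subst]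
  rw [hinv, subst_substInvOfIsUnit_left _ hφ0]

/-- With `φ = X * v` and `u = v⁻¹`, the left side is the residue of `φ' / φ ^ (m + 1)`, which
vanishes for `m ≠ 0` because that quotient is the derivative of `-φ ^ (-m) / m`. -/
theorem coeff_inv_pow_mul_derivative_X_mul [IsAddTorsionFree R] {v u : R⟦X⟧} (hvu : v * u = 1)
    (m : ℕ) : coeff m (u ^ (m + 1) * d⁄dX R (X * v)) = if m = 0 then 1 else 0 := by
  have hφ' : d⁄dX R (X * v) = X * d⁄dX R v + v := by
    rw [Derivation.leibniz, derivative_X, smul_eq_mul, smul_eq_mul, mul_one]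
  rcases m with _ | m
  · have h0 := congrArg constantCoeff hvu
    simp only [map_mul, map_one] at h0
    simp [coeff_zero_eq_constantCoeff_apply, mul_comm, h0]
  have hu' : d⁄dX R u = -u ^ 2 * d⁄dX R v :=
    (d⁄dX R).leibniz_of_mul_eq_one (by rw [mul_comm, hvu])
  -- `(m + 1) * φ' / φ ^ (m + 2) = -(φ ^ (-(m + 1)))'`, multiplied by `X ^ (m + 2)`
  have key : (m + 1) • (u ^ (m + 1 + 1) * d⁄dX R (X * v))
      = (m + 1) • u ^ (m + 1) - X * d⁄dX R (u ^ (m + 1)) := by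
    rw [derivative_pow, hu', hφ', nsmul_eq_mul, nsmul_eq_mul]
    simp only [Nat.add_sub_cancel, Nat.cast_add, Nat.cast_one]
    linear_combination ((m : R⟦X⟧) + 1) * u ^ (m + 1) * hvu
  have hzero : (m + 1) • coeff (m + 1) (u ^ (m + 1 + 1) * d⁄dX R (X * v)) = 0 := by
    rw [← map_nsmul, key, map_sub, map_nsmul, coeff_succ_X_mul, coeff_derivative,
      nsmul_eq_mul, Nat.cast_add, Nat.cast_one, mul_comm, sub_self]
  rw [nsmul_eq_zero_iff_right m.succ_ne_zero] at hzero
  rw [hzero, if_neg m.succ_ne_zero]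

theorem coeff_pow_mul_derivative_mul_inv_pow [IsAddTorsionFree R] {v u : R⟦X⟧} (hvu : v * u = 1)
    {k d : ℕ} (hk : k ≤ d) :
    coeff d ((X * v) ^ k * (d⁄dX R (X * v) * u ^ (d + 1))) = if k = d then 1 else 0 := by
  obtain ⟨m, rfl⟩ := Nat.exists_eq_add_of_le hk
  have hvuk : v ^ k * u ^ k = 1 := by rw [← mul_pow, hvu, one_pow]
  have hsplit : (X * v) ^ k * (d⁄dX R (X * v) * u ^ (k + m + 1))
      = X ^ k * (u ^ (m + 1) * d⁄dX R (X * v)) := by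
    linear_combination (X ^ k * u ^ (m + 1) * d⁄dX R (X * v)) * hvuk
  rw [hsplit, coeff_X_pow_mul', if_pos (Nat.le_add_right k m), Nat.add_sub_cancel_left,
    coeff_inv_pow_mul_derivative_X_mul hvu]
  simp

theorem lagrange_inversion [IsAddTorsionFree R] {v u ψ : R⟦X⟧} (hvu : v * u = 1)
    (hψ0 : constantCoeff ψ = 0) (hψ : (X * v).subst ψ = X) (d : ℕ) :
    (d + 1) • coeff (d + 1) ψ = coeff d (u ^ (d + 1)) := by
  set φ := X * v
  have hv0 : constantCoeff v * constantCoeff u = 1 := by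
    rw [← map_mul, hvu, map_one]
  have hφ0 : constantCoeff φ = 0 := by simp [φ]
  have hφ1 : IsUnit (coeff 1 φ) := by
    rw [coeff_succ_X_mul, coeff_zero_eq_constantCoeff_apply]
    exact IsUnit.of_mul_eq_one _ hv0
  have hchain : (d⁄dX R ψ).subst φ * d⁄dX R φ = 1 := by
    rw [← derivative_subst (HasSubst.of_constantCoeff_zero' hφ0),
      subst_eq_X_of_subst_eq_X hφ0 hψ0 hφ1 hψ, derivative_X]
  calc (d + 1) • coeff (d + 1) ψ = coeff d (d⁄dX R ψ) := by
        rw [coeff_derivative, nsmul_eq_mul, mul_comm]; push_cast; ring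
    _ = ∑ k ∈ range (d + 1), coeff k (d⁄dX R ψ) * coeff d (φ ^ k * (d⁄dX R φ * u ^ (d + 1))) := by
        rw [sum_eq_single_of_mem d (self_mem_range_succ d) fun k hk hkd => ?_]
        · rw [coeff_pow_mul_derivative_mul_inv_pow hvu le_rfl, if_pos rfl, mul_one]
        · rw [coeff_pow_mul_derivative_mul_inv_pow hvu (mem_range_succ_iff.mp hk), if_neg hkd,
            mul_zero]
    _ = coeff d ((d⁄dX R ψ).subst φ * (d⁄dX R φ * u ^ (d + 1))) :=
        (coeff_subst_mul hφ0 _ _ d).symm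
    _ = coeff d (u ^ (d + 1)) := by rw [← mul_assoc, hchain, one_mul]

/-- `(1 - t * g(y)) ^ (-n) = ∑_q multichoose n q * t ^ q * g(y) ^ q` in `(R⟦t⟧)⟦y⟧`, given by its
coefficients: the outer variable is `y`, the inner one `t`. -/
noncomputable def invOneSubCXMulPow (g : R⟦X⟧) (n : ℕ) : R⟦X⟧⟦X⟧ :=
  mk fun m => mk fun q => (n.multichoose q : R) * coeff m (g ^ q)

theorem coeff_coeff_invOneSubCXMulPow (g : R⟦X⟧) (n m q : ℕ) :
    coeff q (coeff m (invOneSubCXMulPow g n)) = n.multichoose q * coeff m (g ^ q) := by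
  rw [invOneSubCXMulPow, coeff_mk, coeff_mk]

theorem coeff_coeff_map_C_mul_invOneSubCXMulPow (g : R⟦X⟧) (n m q : ℕ) :
    coeff q (coeff m (map C g * invOneSubCXMulPow g n))
      = n.multichoose q * coeff m (g ^ (q + 1)) := by
  rw [coeff_mul, map_sum, pow_succ', coeff_mul, mul_sum]
  refine sum_congr rfl fun ij _ => ?_
  rw [coeff_map, coeff_C_mul, coeff_coeff_invOneSubCXMulPow]
  ring

theorem invOneSubCXMulPow_zero (g : R⟦X⟧) : invOneSubCXMulPow g 0 = 1 := by
  ext m q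
  rcases q with _ | q <;> simp [coeff_coeff_invOneSubCXMulPow, coeff_one, apply_ite (coeff _)]

theorem one_sub_C_X_mul_map_C_mul_invOneSubCXMulPow_succ (g : R⟦X⟧) (n : ℕ) :
    (1 - C X * map C g) * invOneSubCXMulPow g (n + 1) = invOneSubCXMulPow g n := by
  ext m q
  rw [sub_mul, one_mul, mul_assoc, map_sub, coeff_C_mul, map_sub]
  rcases q with _ | q
  · simp [coeff_coeff_invOneSubCXMulPow]
  · rw [coeff_succ_X_mul, coeff_coeff_map_C_mul_invOneSubCXMulPow,
      coeff_coeff_invOneSubCXMulPow, coeff_coeff_invOneSubCXMulPow, Nat.multichoose_succ_succ]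
    push_cast
    ring

theorem pow_eq_invOneSubCXMulPow {g : R⟦X⟧} {u : R⟦X⟧⟦X⟧} (hu : (1 - C X * map C g) * u = 1)
    (n : ℕ) : u ^ n = invOneSubCXMulPow g n := by
  have hmul : invOneSubCXMulPow g n * (1 - C X * map C g) ^ n = 1 := by
    induction n with
    | zero => rw [invOneSubCXMulPow_zero, pow_zero, one_mul]
    | succ n ih =>
      rw [← one_sub_C_X_mul_map_C_mul_invOneSubCXMulPow_succ] at ih
      linear_combination ih
  calc u ^ n = u ^ n * (invOneSubCXMulPow g n * (1 - C X * map C g) ^ n) := by rw [hmul, mul_one]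
    _ = invOneSubCXMulPow g n * ((1 - C X * map C g) * u) ^ n := by
        rw [mul_pow, mul_comm (u ^ n), mul_assoc]
    _ = invOneSubCXMulPow g n := by rw [hu, one_pow, mul_one]

end PowerSeries

theorem associated_riordan_diagonal_lgf_general (F : ℚ⟦X⟧)
    (hF0 : constantCoeff (R := ℚ) F = 0)
    (A : ℕ → ℕ → ℚ)
    (hA : ∀ n m : ℕ, A n m = coeff (R := ℚ) n (F ^ m))
    (Xser : (ℚ⟦X⟧)⟦X⟧)
    (hX0 : constantCoeff (R := ℚ⟦X⟧) Xser = 0)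
    (hXeq : Xser - PowerSeries.C (R := ℚ⟦X⟧) PowerSeries.X *
        PowerSeries.substitute Xser (PowerSeries.map (PowerSeries.C (R := ℚ)) F)
      = PowerSeries.X) :
    ∀ d p : ℕ,
      coeff (R := ℚ) p (coeff (R := ℚ⟦X⟧) (d + 1) Xser)
        = ((d + p).choose p : ℚ) * A (d + p) p / (d + 1) := by
  intro d p
  obtain ⟨g, rfl⟩ := X_dvd_iff.mpr hF0
  have hX : HasSubst Xser := HasSubst.of_constantCoeff_zero' hX0
  have hinv : (X * (1 - C X * map C g)).subst Xser = X := by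
    rw [substitute_eq_subst hX0] at hXeq
    rw [show (X : ℚ⟦X⟧⟦X⟧) * (1 - C X * map C g) = X - C X * PowerSeries.map C (X * g) by
      rw [map_mul, map_X]; ring, subst_sub hX, subst_mul hX, subst_X hX, subst_C]
    exact hXeq
  have hu : (1 - C X * map C g) * invOneSubCXMulPow g 1 = 1 := by
    rw [one_sub_C_X_mul_map_C_mul_invOneSubCXMulPow_succ, invOneSubCXMulPow_zero]
  have := IsAddTorsionFree.of_module_rat ℚ⟦X⟧
  have hlag := congrArg (coeff p) (lagrange_inversion hu hX0 hinv d)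
  rw [pow_eq_invOneSubCXMulPow hu, map_nsmul, coeff_coeff_invOneSubCXMulPow, nsmul_eq_mul,
    Nat.multichoose_eq, show d + 1 + p - 1 = d + p by omega] at hlag
  rw [hA, mul_pow, coeff_X_pow_mul, eq_div_iff (by positivity), mul_comm, ← hlag]
  push_cast
  ring

/-- **Associated Riordan case.**  Let `A = (1, F)` be an associated Riordan triangle,
with entries `A(n,m) = [x^n](F^m)`.  Let `X = x(t;y)` be the series in `(ℚ[[t]])[[y]]`
with zero constant term satisfying `X − t·F(X) = y`, i.e. the compositional inverse of
`y(t;x) = x − t·F(x)`.  Then the coefficient of `t^p·y^(d+1)` in `x(t;y)` is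
`binom(d+p,p)·A(d+p,p)/(d+1)`; i.e. `x(t;y) = Σ_d GD̂(d,t)·y^(d+1)/(d+1)` where
`GD̂(d,t) = Σ_p binom(d+p,p)·A(d+p,p)·t^p`. -/
theorem associated_riordan_diagonal_lgf (F : ℚ⟦X⟧)
    (hF0 : constantCoeff (R := ℚ) F = 0) (hF1 : coeff (R := ℚ) 1 F ≠ 0)
    (A : ℕ → ℕ → ℚ)
    (hA : ∀ n m : ℕ, A n m = coeff (R := ℚ) n (F ^ m))
    (Xser : (ℚ⟦X⟧)⟦X⟧)
    (hX0 : constantCoeff (R := ℚ⟦X⟧) Xser = 0)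
    (hXeq : Xser - PowerSeries.C (R := ℚ⟦X⟧) PowerSeries.X *
        PowerSeries.substitute Xser (PowerSeries.map (PowerSeries.C (R := ℚ)) F)
      = PowerSeries.X) :
    ∀ d p : ℕ,
      coeff (R := ℚ) p (coeff (R := ℚ⟦X⟧) (d + 1) Xser)
        = ((d + p).choose p : ℚ) * A (d + p) p / (d + 1) :=
  associated_riordan_diagonal_lgf_general F hF0 A hA Xser hX0 hXeq
end

section
/- Let |s|(n,m) := n!·[x^n]( (−log(1 − x))^m / m! ) denote the unsigned Stirling numbers of the first kind. Then in ℚ[[t]] one has Σ_{m≥0} |s|(m+2, m)·t^m = t·(2 + t)/(1 − t)^5; equivalently, (1 − t)^5 · Σ_{m≥0} |s|(m+2,m)·t^m = 2t + t^2. -/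
/-!
Writing `−log(1 − x) = x·g(x)` with `g = 1 + x/2 + x²/3 + ⋯`, one gets
`[x^(m+2)] (−log(1 − x))^m = [x²] g^m = m/3 + C(m,2)/4`, hence
`|s|(m+2, m) = m(m+1)(m+2)(3m+5)/24 = 2·C(m+3, 4) + C(m+2, 4)`.
Since `1/(1 − t)^5 = Σ C(n+4, 4)·tⁿ`, these are the coefficients of `(2t + t²)/(1 − t)^5`.
-/

open PowerSeries

/-- The formal power series `−log(1 − x) = Σ_{n≥1} x^n/n` over `ℚ`. -/
noncomputable def negLogOneSub : ℚ⟦X⟧ :=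
  PowerSeries.mk fun n => if n = 0 then 0 else 1 / (n : ℚ)

/-- The unsigned Stirling numbers of the first kind,
`|s|(n,m) = n!·[x^n]((−log(1 − x))^m / m!)`. -/
noncomputable def stirling1Unsigned (n m : ℕ) : ℚ :=
  (n.factorial : ℚ) * coeff n (negLogOneSub ^ m) / m.factorial

namespace PowerSeries

variable {R : Type*} [CommSemiring R] {f : R⟦X⟧}

theorem coeff_zero_pow_of_constantCoeff_eq_one (hf : constantCoeff f = 1) (m : ℕ) :
    coeff 0 (f ^ m) = 1 := by
  rw [coeff_zero_eq_constantCoeff_apply, map_pow, hf, one_pow]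

theorem coeff_one_pow_of_constantCoeff_eq_one (hf : constantCoeff f = 1) (m : ℕ) :
    coeff 1 (f ^ m) = m * coeff 1 f := by
  induction m with
  | zero => simp
  | succ k ih =>
    rw [pow_succ, coeff_mul, Finset.Nat.sum_antidiagonal_eq_sum_range_succ_mk, Finset.sum_range_succ,
      Finset.sum_range_one, coeff_zero_pow_of_constantCoeff_eq_one hf, ih, Nat.sub_self,
      coeff_zero_eq_constantCoeff_apply, hf]
    push_cast
    ring

theorem coeff_two_pow_of_constantCoeff_eq_one (hf : constantCoeff f = 1) (m : ℕ) :
    coeff 2 (f ^ m) = m * coeff 2 f + m.choose 2 * coeff 1 f ^ 2 := by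
  induction m with
  | zero => simp
  | succ k ih =>
    rw [pow_succ, coeff_mul, Finset.Nat.sum_antidiagonal_eq_sum_range_succ_mk, Finset.sum_range_succ,
      Finset.sum_range_succ, Finset.sum_range_one, coeff_zero_pow_of_constantCoeff_eq_one hf,
      coeff_one_pow_of_constantCoeff_eq_one hf, ih, Nat.sub_self, coeff_zero_eq_constantCoeff_apply, hf,
      Nat.choose_succ_succ', Nat.choose_one_right]
    push_cast
    ring

end PowerSeries

theorem negLogOneSub_eq_X_mul : negLogOneSub = X * mk fun n => 1 / ((n : ℚ) + 1) := by
  ext (_ | n) <;> simp [negLogOneSub, coeff_succ_X_mul]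

theorem coeff_add_two_negLogOneSub_pow (m : ℕ) :
    coeff (m + 2) (negLogOneSub ^ m) = m / 3 + m.choose 2 / 4 := by
  have hg : constantCoeff (mk fun n => 1 / ((n : ℚ) + 1)) = 1 := by
    simp [← coeff_zero_eq_constantCoeff_apply]
  rw [negLogOneSub_eq_X_mul, mul_pow, add_comm m 2, coeff_X_pow_mul,
    coeff_two_pow_of_constantCoeff_eq_one hg]
  simp only [coeff_mk]
  ring

theorem stirling1Unsigned_add_two_self (m : ℕ) :
    stirling1Unsigned (m + 2) m = m * (m + 1) * (m + 2) * (3 * m + 5) / 24 := by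
  rw [stirling1Unsigned, coeff_add_two_negLogOneSub_pow, Nat.factorial_succ, Nat.factorial_succ,
    Nat.cast_choose_two]
  have hm : (m.factorial : ℚ) ≠ 0 := mod_cast m.factorial_ne_zero
  field_simp
  push_cast
  ring

theorem cast_four_add_choose_four (n : ℕ) :
    ((4 + n).choose 4 : ℚ) = (n + 1) * (n + 2) * (n + 3) * (n + 4) / 24 := by
  rw [Nat.cast_choose_eq_ascPochhammer_div, show 4 + n - (4 - 1) = n + 1 by omega]
  simp only [ascPochhammer_succ_eval, ascPochhammer_zero, Polynomial.eval_one, Nat.factorial]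
  push_cast
  ring

theorem mk_stirling1Unsigned_add_two_self :
    mk (fun m => stirling1Unsigned (m + 2) m)
      = (2 * X + X ^ 2) * mk fun n => ((4 + n).choose 4 : ℚ) := by
  rw [show (2 * X + X ^ 2 : ℚ⟦X⟧) = X * (C 2 + X) by rw [map_ofNat]; ring, mul_assoc, add_mul]
  ext (_ | _ | n)
  · simp [stirling1Unsigned_add_two_self]
  · norm_num [coeff_succ_X_mul, stirling1Unsigned_add_two_self, cast_four_add_choose_four]
  · simp only [coeff_mk, coeff_succ_X_mul, map_add, coeff_C_mul, stirling1Unsigned_add_two_self,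
      cast_four_add_choose_four]
    push_cast
    ring

/-- The o.g.f. of the third (`d = 2`) diagonal of the unsigned Stirling1 triangle:
`Σ_m |s|(m+2,m)·t^m = t(2 + t)/(1 − t)^5`, stated in the equivalent form
`(1 − t)^5 · Σ_m |s|(m+2,m)·t^m = 2t + t^2` in `ℚ[[t]]`. -/
theorem stirling1_diagonal_two_ogf :
    (1 - PowerSeries.X : ℚ⟦X⟧) ^ 5 * PowerSeries.mk (fun m => stirling1Unsigned (m + 2) m)
      = 2 * PowerSeries.X + PowerSeries.X ^ 2 := by
  calc (1 - X : ℚ⟦X⟧) ^ 5 * mk (fun m => stirling1Unsigned (m + 2) m)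
      = (2 * X + X ^ 2) * ((mk fun n => ((4 + n).choose 4 : ℚ)) * (1 - X) ^ (4 + 1)) := by
        rw [mk_stirling1Unsigned_add_two_self]; ring
    _ = 2 * X + X ^ 2 := by rw [mk_add_choose_mul_one_sub_pow_eq_one, mul_one]
end

section
/- Let S(n,m) := n!·[x^n]( e^x·(e^{2x} − 1)^m / m! ) be the entries of the generalized Stirling2 Sheffer triangle S2[2,1] = (e^s, e^{2s} − 1). Then in ℚ[[t]] one has Σ_{m≥0} S(m+2, m)·t^m = (1 + 16t + 12t^2)/(1 − 2t)^5; equivalently, (1 − 2t)^5 · Σ_{m≥0} S(m+2,m)·t^m = 1 + 16t + 12t^2. -/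
/-!
Since `e^{2x} - 1 = 2x·u(x)` with `u(0) = 1`, the coefficient `[x^{m+2}] e^x (e^{2x} - 1)^m` only
involves the first three coefficients of `u^m`, which gives the closed form
`S(m+2, m) = 2^m (m+2)(m+1)(3m^2+7m+3)/6`. In the binomial basis this quartic is
`C(m+4,4) + 8 C(m+3,4) + 3 C(m+2,4)`, whose o.g.f. is `(1 + 8t + 3t^2)/(1 - t)^5`; the factor `2^m`
substitutes `2t` for `t`.
-/

open PowerSeries

/-- The entries of the generalized Stirling2 Sheffer triangle
`S2[2,1] = (e^s, e^{2s} − 1)`: `S(n,m) = n!·[x^n](e^x·(e^{2x} − 1)^m / m!)`. -/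
noncomputable def genStirling2_21 (n m : ℕ) : ℚ :=
  (n.factorial : ℚ) * coeff n (exp ℚ * (rescale (2 : ℚ) (exp ℚ) - 1) ^ m) / m.factorial

lemma Nat.cast_choose_four {K : Type*} [Field K] [CharZero K] (n : ℕ) :
    (n.choose 4 : K) = n * (n - 1) * (n - 2) * (n - 3) / 24 := by
  rw [Nat.cast_choose_eq_descPochhammer_div]
  simp only [descPochhammer_succ_right, descPochhammer_zero, Polynomial.eval_mul,
    Polynomial.eval_sub, Polynomial.eval_X, Polynomial.eval_one, Polynomial.eval_natCast,
    Nat.factorial]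
  push_cast
  ring

namespace PowerSeries

section CommSemiring

variable {R : Type*} [CommSemiring R]

lemma coeff_two_mul (φ ψ : R⟦X⟧) :
    coeff 2 (φ * ψ) =
      constantCoeff φ * coeff 2 ψ + coeff 1 φ * coeff 1 ψ + coeff 2 φ * constantCoeff ψ := by
  rw [coeff_mul, Finset.Nat.sum_antidiagonal_eq_sum_range_succ_mk]
  simp [Finset.sum_range_succ, coeff_zero_eq_constantCoeff]

lemma coeff_two_pow_of_constantCoeff_eq_one_s13 {φ : R⟦X⟧} (hφ : constantCoeff φ = 1) (n : ℕ) :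
    coeff 2 (φ ^ n) = n * coeff 2 φ + n.choose 2 * coeff 1 φ ^ 2 := by
  induction n with
  | zero => simp
  | succ n ih =>
    rw [pow_succ, coeff_two_mul, ih, coeff_one_pow, map_pow, hφ, Nat.choose_succ_succ',
      Nat.choose_one_right]
    push_cast
    ring

lemma X_pow_mul_mk_add_choose {d : ℕ} (hd : 0 < d) (k : ℕ) :
    (X ^ k * mk fun n => (Nat.choose (d + n) d : R)) =
      mk fun n => (Nat.choose (d + n - k) d : R) := by
  ext n
  rw [coeff_X_pow_mul', coeff_mk, coeff_mk]
  split_ifs with hk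
  · rw [Nat.add_sub_assoc hk]
  · rw [Nat.choose_eq_zero_of_lt (by omega), Nat.cast_zero]

end CommSemiring

variable (a : ℚ)

noncomputable def expSubOneDivX : ℚ⟦X⟧ :=
  mk fun n => a ^ n / (n + 1).factorial

lemma C_mul_X_mul_expSubOneDivX :
    C a * X * expSubOneDivX a = rescale a (exp ℚ) - 1 := by
  ext (_ | n)
  · simp [mul_assoc, coeff_zero_X_mul, coeff_rescale, coeff_exp, -coeff_zero_eq_constantCoeff]
  · rw [mul_assoc, coeff_C_mul, coeff_succ_X_mul, expSubOneDivX, coeff_mk, map_sub,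
      coeff_rescale, coeff_exp, coeff_one, if_neg n.succ_ne_zero, sub_zero,
      Algebra.algebraMap_self, RingHom.id_apply]
    ring

@[simp]
lemma constantCoeff_expSubOneDivX : constantCoeff (expSubOneDivX a) = 1 := by
  simp [expSubOneDivX, ← coeff_zero_eq_constantCoeff_apply]

@[simp]
lemma coeff_one_expSubOneDivX : coeff 1 (expSubOneDivX a) = a / 2 := by
  norm_num [expSubOneDivX, Nat.factorial]

@[simp]
lemma coeff_two_expSubOneDivX : coeff 2 (expSubOneDivX a) = a ^ 2 / 6 := by
  norm_num [expSubOneDivX, Nat.factorial]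

end PowerSeries

theorem genStirling2_21_add_two_self (m : ℕ) :
    genStirling2_21 (m + 2) m = 2 ^ m * ((m + 2) * (m + 1) * (3 * m ^ 2 + 7 * m + 3) / 6) := by
  have hpow : (rescale (2 : ℚ) (exp ℚ) - 1) ^ m = X ^ m * (C (2 ^ m) * expSubOneDivX 2 ^ m) := by
    rw [← C_mul_X_mul_expSubOneDivX, mul_pow, mul_pow, map_pow]
    ring
  have hcoeff : coeff (m + 2) (exp ℚ * (rescale (2 : ℚ) (exp ℚ) - 1) ^ m)
      = 2 ^ m * coeff 2 (exp ℚ * expSubOneDivX 2 ^ m) := by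
    rw [hpow, mul_left_comm, add_comm, coeff_X_pow_mul, mul_left_comm, coeff_C_mul]
  have hfac : ((m + 2).factorial : ℚ) = (m + 2) * (m + 1) * m.factorial := by
    push_cast [Nat.factorial_succ]; ring
  have hexp₁ : coeff 1 (exp ℚ) = 1 := by simp [coeff_exp]
  have hexp₂ : coeff 2 (exp ℚ) = 1 / 2 := by simp [coeff_exp, Nat.factorial]
  rw [genStirling2_21, hcoeff, coeff_two_mul, coeff_two_pow_of_constantCoeff_eq_one_s13 (by simp),
    coeff_one_pow, hfac, hexp₁, hexp₂, map_pow, constantCoeff_exp, constantCoeff_expSubOneDivX,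
    coeff_one_expSubOneDivX, coeff_two_expSubOneDivX, Nat.cast_choose_two, one_pow, one_pow]
  field_simp
  ring

lemma mk_quartic_eq_mul_mk_add_choose :
    (mk fun m : ℕ => ((m + 2) * (m + 1) * (3 * m ^ 2 + 7 * m + 3) / 6 : ℚ))
      = (1 + 8 * X + 3 * X ^ 2) * mk fun n => (Nat.choose (4 + n) 4 : ℚ) := by
  have hX := X_pow_mul_mk_add_choose (R := ℚ) (by norm_num : 0 < 4) 1
  have hX2 := X_pow_mul_mk_add_choose (R := ℚ) (by norm_num : 0 < 4) 2
  rw [pow_one] at hX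
  rw [add_mul, add_mul, one_mul, mul_assoc, mul_assoc, hX, hX2]
  ext m
  rw [← map_ofNat C 8, ← map_ofNat C 3]
  simp only [map_add, coeff_mk, coeff_C_mul]
  rw [show 4 + m - 1 = m + 3 by omega, show 4 + m - 2 = m + 2 by omega]
  simp only [Nat.cast_choose_four]
  push_cast
  ring

/-- The o.g.f. of the third (`d = 2`) diagonal of the triangle `S2[2,1]`:
`Σ_m S(m+2,m)·t^m = (1 + 16t + 12t^2)/(1 − 2t)^5`, stated in the equivalent form
`(1 − 2t)^5 · Σ_m S(m+2,m)·t^m = 1 + 16t + 12t^2` in `ℚ[[t]]`. -/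
theorem genStirling2_21_diagonal_two_ogf :
    (1 - 2 * PowerSeries.X : ℚ⟦X⟧) ^ 5 * PowerSeries.mk (fun m => genStirling2_21 (m + 2) m)
      = 1 + 16 * PowerSeries.X + 12 * PowerSeries.X ^ 2 := by
  have hdiag : (mk fun m => genStirling2_21 (m + 2) m)
      = rescale 2 (mk fun m : ℕ => ((m + 2) * (m + 1) * (3 * m ^ 2 + 7 * m + 3) / 6 : ℚ)) := by
    simp only [rescale_mk, genStirling2_21_add_two_self]
  have hbase : (1 - 2 * X : ℚ⟦X⟧) = rescale 2 (1 - X) := by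
    simp [rescale_X, map_ofNat]
  calc (1 - 2 * X : ℚ⟦X⟧) ^ 5 * mk (fun m => genStirling2_21 (m + 2) m)
      = rescale 2 ((1 + 8 * X + 3 * X ^ 2) *
          ((mk fun n => (Nat.choose (4 + n) 4 : ℚ)) * (1 - X) ^ 5)) := by
        rw [hdiag, hbase, mk_quartic_eq_mul_mk_add_choose, ← map_pow, ← map_mul]
        congr 1
        ring
    _ = 1 + 16 * X + 12 * X ^ 2 := by
        rw [mk_add_choose_mul_one_sub_pow_eq_one, mul_one]
        simp only [map_add, map_one, map_mul, map_pow, map_ofNat, rescale_X]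
        ring
end

section
/- Let g(x) := Σ_{n≥0} ( ∏_{j=0}^{n−1} (3j+1) )·x^n/n! (the formal series (1 − 3x)^{−1/3}) and f(x) := Σ_{n≥1} 3^{n−1}·x^n/n (the formal series −(1/3)·log(1 − 3x)), and let S(n,m) := n!·[x^n]( g(x)·f(x)^m / m! ) be the entries of the generalized signless Stirling1 Sheffer triangle (OEIS A286718). Then in ℚ[[t]] one has Σ_{m≥0} S(m+1, m)·t^m = (1 + 2t)/(1 − t)^3; equivalently, S(m+1, m) = (m+1)(3m+2)/2 for all m ≥ 0 (the pentagonal numbers, A000326(m+1)). -/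
open PowerSeries

/-- The formal power series `(1 − 3x)^{−1/3} = Σ_n (∏_{j<n}(3j+1))·x^n/n!` over `ℚ`. -/
noncomputable def gA286718 : ℚ⟦X⟧ :=
  PowerSeries.mk fun n => (∏ j ∈ Finset.range n, ((3 * j + 1 : ℕ) : ℚ)) / n.factorial

/-- The formal power series `−(1/3)·log(1 − 3x) = Σ_{n≥1} 3^{n−1}·x^n/n` over `ℚ`. -/
noncomputable def fA286718 : ℚ⟦X⟧ :=
  PowerSeries.mk fun n => if n = 0 then 0 else (3 : ℚ) ^ (n - 1) / n

/-- The entries of the generalized signless Stirling1 Sheffer triangle A286718,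
`((1 − 3s)^{−1/3}, −(1/3)log(1 − 3s))`: `S(n,m) = n!·[x^n](g(x)·f(x)^m / m!)`. -/
noncomputable def A286718 (n m : ℕ) : ℚ :=
  (n.factorial : ℚ) * coeff n (gA286718 * fA286718 ^ m) / m.factorial

/-! Writing `f = x·h`, the coefficient `[x^(m+1)] g·f^m` is `[x^1] g·h^m = g₁ + m·h₁ = 1 + 3m/2`
because `g₀ = h₀ = 1`; hence `S(m+1,m) = (m+1)(3m+2)/2 = C(m+2,2) + 2·C(m+1,2)`, the coefficients
of `(1 + 2t)·(1 − t)⁻³`. -/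

namespace PowerSeries

variable {R : Type*} [CommSemiring R]

theorem coeff_succ_mul_X_mul_pow (g h : R⟦X⟧) (m : ℕ) :
    coeff (m + 1) (g * (X * h) ^ m) =
      coeff 1 g * constantCoeff h ^ m +
        m * coeff 1 h * constantCoeff h ^ (m - 1) * constantCoeff g := by
  rw [mul_pow, mul_left_comm, add_comm, coeff_X_pow_mul, coeff_one_mul, coeff_one_pow, map_pow]

end PowerSeries

noncomputable def fA286718DivX : ℚ⟦X⟧ :=
  mk fun n => (3 : ℚ) ^ n / (n + 1)

theorem fA286718_eq_X_mul : fA286718 = X * fA286718DivX := by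
  ext (_ | n)
  · simp [fA286718]
  · simp [fA286718, fA286718DivX, coeff_succ_X_mul]

theorem A286718_succ_self (m : ℕ) : A286718 (m + 1) m = ((m : ℚ) + 1) * (3 * m + 2) / 2 := by
  have hcoeff : coeff (m + 1) (gA286718 * fA286718 ^ m) = 1 + m * (3 / 2) := by
    rw [fA286718_eq_X_mul, coeff_succ_mul_X_mul_pow]
    norm_num [gA286718, fA286718DivX, ← coeff_zero_eq_constantCoeff]
  rw [A286718, hcoeff, Nat.factorial_succ, Nat.cast_mul]
  field_simp
  push_cast
  ring

theorem mk_pentagonal_succ_eq_mul_invOneSubPow :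
    mk (fun m : ℕ => ((m : ℚ) + 1) * (3 * m + 2) / 2) = (1 + 2 * X) * (invOneSubPow ℚ 3).val := by
  rw [invOneSubPow_val_succ_eq_mk_add_choose, add_mul, one_mul, mul_assoc, mul_left_comm,
    ← map_ofNat C, ← smul_eq_C_mul]
  ext (_ | n)
  · simp
  · simp [coeff_succ_X_mul, Nat.cast_choose_two]
    ring

/-- The o.g.f. of the second (`d = 1`) diagonal of the triangle A286718:
`Σ_m S(m+1,m)·t^m = (1 + 2t)/(1 − t)^3`, equivalently
`S(m+1,m) = (m+1)(3m+2)/2` for all `m ≥ 0` (the pentagonal numbers A000326(m+1)). -/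
theorem A286718_diagonal_one_ogf :
    (1 - PowerSeries.X : ℚ⟦X⟧) ^ 3 * PowerSeries.mk (fun m => A286718 (m + 1) m)
        = 1 + 2 * PowerSeries.X
      ∧ ∀ m : ℕ, A286718 (m + 1) m = ((m : ℚ) + 1) * (3 * m + 2) / 2 := by
  refine ⟨?_, A286718_succ_self⟩
  simp_rw [A286718_succ_self]
  rw [mk_pentagonal_succ_eq_mul_invOneSubPow, mul_left_comm, ← invOneSubPow_inv_eq_one_sub_pow,
    Units.inv_val, mul_one]
end
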